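/- arXiv:1311.1900 — 6 statements merged into one kernel-verified Lean document; each statement's English description precedes it below -/
import Mathlib

section
/- Let (X, L) be a random vector with values in ℝ × [0,∞) whose law has density h(x,l) = (1/√(2π))·(|x|+l)·exp(−(|x|+l)²/2) with respect to Lebesgue measure on ℝ × [0,∞). Then almost surely E[L | σ(X)] = H(|X|) and E[|X| | σ(L)] = H(L), where H(l) = e^{l²/2} ∫_l^∞ e^{−x²/2} dx. -/
/-!
Write `u = |x| + l`, so that the density is `u e^{-u²/2} / √(2π)` on `l ≥ 0`. With one variable
frozen at `b ≥ 0` (`b = |x|`, resp. `b = l`) and the other one `t > 0` integrated out,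
`∫ (t + b) e^{-(t+b)²/2} dt = e^{-b²/2}`, while an integration by parts gives
`∫ t (t + b) e^{-(t+b)²/2} dt = ∫_b^∞ e^{-u²/2} du = H(b) e^{-b²/2}`. So in both directions the
conditional mean is the ratio `H(b)` (for `E[|X| | L]` the two signs of `x` contribute a common
factor 2). The conditional expectations are then identified through their integrals over
`{X ∈ A}` (resp. `{L ∈ B}`), computed by Fubini against the density.
-/

open MeasureTheory ProbabilityTheory Real
open scoped ENNReal

/-- `H l = e^{l²/2} ∫_l^∞ e^{-x²/2} dx`. -/
noncomputable def H (l : ℝ) : ℝ :=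
  Real.exp (l ^ 2 / 2) * ∫ x in Set.Ioi l, Real.exp (-x ^ 2 / 2)

/-- The joint density of `(B₁, L₁)`:
`h x l = (1/√(2π)) (|x|+l) exp(-(|x|+l)²/2)` for `x ∈ ℝ`, `l ≥ 0`. -/
noncomputable def jointDensity (x l : ℝ) : ℝ :=
  (1 / Real.sqrt (2 * π)) * (|x| + l) * Real.exp (-(|x| + l) ^ 2 / 2)

open Set Filter

section JointLaw

variable {Ω α β : Type*} {mΩ : MeasurableSpace Ω} [mα : MeasurableSpace α] [MeasurableSpace β]
  {μ : Measure Ω} {ν : Measure α} {ρ : Measure β} {X : Ω → α} {Y : Ω → β} {f : α × β → ℝ}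

lemma map_prodMk_swap_eq_withDensity [SFinite ν] [SFinite ρ] (hX : Measurable X)
    (hY : Measurable Y) {g : α × β → ℝ≥0∞} (hg : Measurable g)
    (hlaw : μ.map (fun ω => (X ω, Y ω)) = (ν.prod ρ).withDensity g) :
    μ.map (fun ω => (Y ω, X ω)) = (ρ.prod ν).withDensity (fun p => g p.swap) := by
  have hswap : (fun ω => (Y ω, X ω)) = Prod.swap ∘ fun ω => (X ω, Y ω) := rfl
  have hg' : Measurable fun p : β × α => g p.swap := hg.comp measurable_swap
  ext s hs
  rw [hswap, ← Measure.map_map measurable_swap (hX.prodMk hY), hlaw,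
    Measure.map_apply measurable_swap hs, withDensity_apply _ (measurable_swap hs),
    withDensity_apply _ hs, ← Measure.prod_swap (μ := ν) (ν := ρ),
    setLIntegral_map hs hg' measurable_swap]
  simp

lemma integrable_comp_prodMk_iff (hX : Measurable X) (hY : Measurable Y) (hf : Measurable f)
    (hf0 : 0 ≤ f)
    (hlaw : μ.map (fun ω => (X ω, Y ω)) = (ν.prod ρ).withDensity (fun p => ENNReal.ofReal (f p)))
    {F : α × β → ℝ} (hF : Measurable F) :
    Integrable (fun ω => F (X ω, Y ω)) μ ↔ Integrable (fun p => f p * F p) (ν.prod ρ) := by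
  rw [← Function.comp_def F, ← integrable_map_measure hF.aestronglyMeasurable
    (hX.prodMk hY).aemeasurable, hlaw, integrable_withDensity_iff_integrable_smul'
    hf.ennreal_ofReal (Eventually.of_forall fun _ => ENNReal.ofReal_lt_top)]
  simp only [ENNReal.toReal_ofReal (hf0 _), smul_eq_mul]

lemma setIntegral_preimage_eq_integral_mul_density [SFinite ν] [SFinite ρ] (hX : Measurable X)
    (hY : Measurable Y) (hf : Measurable f) (hf0 : 0 ≤ f)
    (hlaw : μ.map (fun ω => (X ω, Y ω)) = (ν.prod ρ).withDensity (fun p => ENNReal.ofReal (f p)))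
    {F : α × β → ℝ} (hF : Measurable F) (hfF : Integrable (fun p => f p * F p) (ν.prod ρ))
    {A : Set α} (hA : MeasurableSet A) :
    ∫ ω in X ⁻¹' A, F (X ω, Y ω) ∂μ = ∫ x in A, ∫ y, f (x, y) * F (x, y) ∂ρ ∂ν := by
  have hs : MeasurableSet (A ×ˢ (univ : Set β)) := hA.prod MeasurableSet.univ
  calc ∫ ω in X ⁻¹' A, F (X ω, Y ω) ∂μ
      = ∫ p in A ×ˢ univ, F p ∂(μ.map fun ω => (X ω, Y ω)) := by
        rw [setIntegral_map hs hF.aestronglyMeasurable (hX.prodMk hY).aemeasurable,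
          mk_preimage_prod, preimage_univ, inter_univ]
    _ = ∫ p in A ×ˢ univ, f p * F p ∂(ν.prod ρ) := by
        rw [hlaw, setIntegral_withDensity_eq_setIntegral_toReal_smul hf.ennreal_ofReal
          (Eventually.of_forall fun _ => ENNReal.ofReal_lt_top) _ hs]
        simp only [ENNReal.toReal_ofReal (hf0 _), smul_eq_mul]
    _ = ∫ x in A, ∫ y, f (x, y) * F (x, y) ∂ρ ∂ν := by
        rw [setIntegral_prod _ hfF.integrableOn, Measure.restrict_univ]

theorem condExp_comp_snd_ae_eq_of_map_eq_withDensity [IsFiniteMeasure μ] [SFinite ν] [SFinite ρ]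
    (hX : Measurable X) (hY : Measurable Y) (hf : Measurable f) (hf0 : 0 ≤ f)
    (hlaw : μ.map (fun ω => (X ω, Y ω)) = (ν.prod ρ).withDensity (fun p => ENNReal.ofReal (f p)))
    {φ : β → ℝ} {ψ : α → ℝ} (hφ : Measurable φ) (hψ : Measurable ψ)
    (hfφ : Integrable (fun p => f p * φ p.2) (ν.prod ρ))
    (hfψ : Integrable (fun p => f p * ψ p.1) (ν.prod ρ))
    (hmarg : ∀ᵐ x ∂ν, ∫ y, f (x, y) * φ y ∂ρ = ψ x * ∫ y, f (x, y) ∂ρ) :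
    μ[φ ∘ Y | mα.comap X] =ᵐ[μ] ψ ∘ X := by
  have hφY := (integrable_comp_prodMk_iff hX hY hf hf0 hlaw (hφ.comp measurable_snd)).2 hfφ
  have hψX := (integrable_comp_prodMk_iff hX hY hf hf0 hlaw (hψ.comp measurable_fst)).2 hfψ
  refine (ae_eq_condExp_of_forall_setIntegral_eq hX.comap_le hφY (fun _ _ _ => hψX.integrableOn)
    ?_ (hψ.comp (comap_measurable X)).aestronglyMeasurable).symm
  rintro _ ⟨A, hA, rfl⟩ -
  have hψA := setIntegral_preimage_eq_integral_mul_density hX hY hf hf0 hlaw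
    (hψ.comp measurable_fst) hfψ hA
  have hφA := setIntegral_preimage_eq_integral_mul_density hX hY hf hf0 hlaw
    (hφ.comp measurable_snd) hfφ hA
  simp only [Function.comp_def] at hψA hφA ⊢
  rw [hψA, hφA]
  refine setIntegral_congr_ae hA (hmarg.mono fun x hx _ => ?_)
  rw [hx, ← integral_const_mul]
  simp only [mul_comm]

end JointLaw

lemma integrable_pow_mul_exp_neg_sq_div_two (k : ℕ) :
    Integrable fun u : ℝ => u ^ k * exp (-u ^ 2 / 2) := by
  refine (integrable_rpow_mul_exp_neg_mul_sq (b := 1 / 2) (by norm_num) (s := k)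
    (by linarith [k.cast_nonneg (α := ℝ)])).congr (Eventually.of_forall fun u => ?_)
  simp only [rpow_natCast]
  ring_nf

lemma integrable_exp_neg_sq_div_two : Integrable fun u : ℝ => exp (-u ^ 2 / 2) := by
  simpa using integrable_pow_mul_exp_neg_sq_div_two 0

lemma integral_Ioi_comp_add_right {E : Type*} [NormedAddCommGroup E] [NormedSpace ℝ E]
    (g : ℝ → E) (a b : ℝ) : ∫ t in Ioi a, g (t + b) = ∫ u in Ioi (a + b), g u := by
  have := (measurePreserving_add_right volume b).setIntegral_preimage_emb
    (measurableEmbedding_addRight b) g (Ioi (a + b))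
  rwa [preimage_add_const_Ioi, add_sub_cancel_right] at this

lemma hasDerivAt_exp_neg_sq_div_two (b x : ℝ) :
    HasDerivAt (fun t => exp (-(t + b) ^ 2 / 2)) (-(x + b) * exp (-(x + b) ^ 2 / 2)) x := by
  have h : HasDerivAt (fun t => -(t + b) ^ 2 / 2) (-(x + b)) x :=
    ((((hasDerivAt_id' x).add_const b).fun_pow 2).fun_neg.div_const 2).congr_deriv (by ring)
  simpa [mul_comm] using h.exp

lemma integral_Ioi_add_mul_exp (b : ℝ) :
    ∫ t in Ioi (0 : ℝ), (t + b) * exp (-(t + b) ^ 2 / 2) = exp (-b ^ 2 / 2) := by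
  have hderiv (x : ℝ) : HasDerivAt (fun t => -exp (-(t + b) ^ 2 / 2))
      ((x + b) * exp (-(x + b) ^ 2 / 2)) x :=
    (hasDerivAt_exp_neg_sq_div_two b x).fun_neg.congr_deriv (by ring)
  have hint : IntegrableOn (fun t => (t + b) * exp (-(t + b) ^ 2 / 2)) (Ioi 0) := by
    simpa using ((integrable_pow_mul_exp_neg_sq_div_two 1).comp_add_right b).integrableOn
  have hlim : Tendsto (fun t => -exp (-(t + b) ^ 2 / 2)) atTop (nhds 0) :=
    tendsto_zero_of_hasDerivAt_of_integrableOn_Ioi (a := 0) (fun x _ => hderiv x) hint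
      (integrable_exp_neg_sq_div_two.comp_add_right b).neg.integrableOn
  simpa using integral_Ioi_of_hasDerivAt_of_tendsto' (fun x _ => hderiv x) hint hlim

lemma integral_Ioi_mul_add_mul_exp (b : ℝ) :
    ∫ t in Ioi (0 : ℝ), t * ((t + b) * exp (-(t + b) ^ 2 / 2))
      = ∫ u in Ioi b, exp (-u ^ 2 / 2) := by
  have he : Integrable fun t => exp (-(t + b) ^ 2 / 2) :=
    integrable_exp_neg_sq_div_two.comp_add_right b
  have hint : Integrable fun t => t * ((t + b) * exp (-(t + b) ^ 2 / 2)) := by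
    refine (((integrable_pow_mul_exp_neg_sq_div_two 2).comp_add_right b).sub
      (((integrable_pow_mul_exp_neg_sq_div_two 1).comp_add_right b).const_mul b)).congr
      (Eventually.of_forall fun t => ?_)
    simp only [Pi.sub_apply]
    ring
  have hderiv (x : ℝ) : HasDerivAt (fun t => -(t * exp (-(t + b) ^ 2 / 2)))
      (x * ((x + b) * exp (-(x + b) ^ 2 / 2)) - exp (-(x + b) ^ 2 / 2)) x :=
    ((hasDerivAt_id' x).fun_mul (hasDerivAt_exp_neg_sq_div_two b x)).fun_neg.congr_deriv
      (by ring)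
  have hlim : Tendsto (fun t => -(t * exp (-(t + b) ^ 2 / 2))) atTop (nhds 0) := by
    refine tendsto_zero_of_hasDerivAt_of_integrableOn_Ioi (a := 0) (fun x _ => hderiv x)
      (hint.sub he).integrableOn (Integrable.neg ?_).integrableOn
    refine (((integrable_pow_mul_exp_neg_sq_div_two 1).comp_add_right b).sub
      (he.const_mul b)).congr (Eventually.of_forall fun t => ?_)
    simp only [Pi.sub_apply]
    ring
  have hFTC := integral_Ioi_of_hasDerivAt_of_tendsto' (a := 0) (fun x _ => hderiv x)
    (hint.sub he).integrableOn hlim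
  rw [integral_sub hint.integrableOn he.integrableOn] at hFTC
  have hshift := integral_Ioi_comp_add_right (fun u => exp (-u ^ 2 / 2)) 0 b
  rw [zero_add] at hshift
  rw [← hshift]
  simpa [sub_eq_zero] using hFTC

lemma integral_Ioi_mul_add_mul_exp_eq_H_mul (b : ℝ) :
    ∫ t in Ioi (0 : ℝ), t * ((t + b) * exp (-(t + b) ^ 2 / 2))
      = H b * ∫ t in Ioi (0 : ℝ), (t + b) * exp (-(t + b) ^ 2 / 2) := by
  rw [integral_Ioi_mul_add_mul_exp, integral_Ioi_add_mul_exp, H, mul_right_comm, ← exp_add]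
  ring_nf
  rw [exp_zero, one_mul]

lemma H_nonneg (l : ℝ) : 0 ≤ H l :=
  mul_nonneg (exp_pos _).le (setIntegral_nonneg measurableSet_Ioi fun _ _ => (exp_pos _).le)

lemma measurable_H : Measurable H := by
  have htail : Antitone fun l : ℝ => ∫ x in Ioi l, exp (-x ^ 2 / 2) := fun _ _ hab =>
    setIntegral_mono_set integrable_exp_neg_sq_div_two.integrableOn
      (Eventually.of_forall fun _ => (exp_pos _).le) (Ioi_subset_Ioi hab).eventuallyLE
  exact (by fun_prop : Measurable fun l : ℝ => exp (l ^ 2 / 2)).mul htail.measurable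

lemma H_le_H_zero {b : ℝ} (hb : 0 ≤ b) : H b ≤ H 0 := by
  have hH (c : ℝ) : H c = ∫ t in Ioi (0 : ℝ), exp (c ^ 2 / 2) * exp (-(t + c) ^ 2 / 2) := by
    rw [integral_const_mul, integral_Ioi_comp_add_right (fun u => exp (-u ^ 2 / 2)), zero_add, H]
  rw [hH, hH]
  -- the exponent `b²/2 - (t + b)²/2` is `-t²/2 - bt`
  refine setIntegral_mono_on
    ((integrable_exp_neg_sq_div_two.comp_add_right b).const_mul _).integrableOn
    ((integrable_exp_neg_sq_div_two.comp_add_right 0).const_mul _).integrableOn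
    measurableSet_Ioi fun t ht => ?_
  rw [← exp_add, ← exp_add]
  exact exp_le_exp.2 (by nlinarith [mem_Ioi.1 ht])

lemma jointDensity_nonneg (x : ℝ) {l : ℝ} (hl : 0 ≤ l) : 0 ≤ jointDensity x l :=
  mul_nonneg (mul_nonneg (by positivity) (add_nonneg (abs_nonneg x) hl)) (exp_pos _).le

lemma jointDensity_abs (x l : ℝ) : jointDensity |x| l = jointDensity x l := by
  rw [jointDensity, jointDensity, abs_abs]

lemma jointDensity_comm_of_nonneg {l : ℝ} (hl : 0 ≤ l) (x : ℝ) :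
    jointDensity x l = jointDensity l |x| := by
  rw [jointDensity, jointDensity, abs_of_nonneg hl, add_comm l]

lemma jointDensity_eq_of_nonneg {t : ℝ} (ht : 0 ≤ t) (b : ℝ) :
    jointDensity t b = 1 / √(2 * π) * ((t + b) * exp (-(t + b) ^ 2 / 2)) := by
  rw [jointDensity, abs_of_nonneg ht, mul_assoc]

lemma integral_Ioi_mul_jointDensity (b : ℝ) :
    ∫ t in Ioi (0 : ℝ), t * jointDensity t b = H b * ∫ t in Ioi (0 : ℝ), jointDensity t b := by
  have h (g : ℝ → ℝ) : ∫ t in Ioi (0 : ℝ), g t * jointDensity t b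
      = 1 / √(2 * π) * ∫ t in Ioi (0 : ℝ), g t * ((t + b) * exp (-(t + b) ^ 2 / 2)) := by
    rw [← integral_const_mul]
    refine setIntegral_congr_fun measurableSet_Ioi fun t ht => ?_
    rw [jointDensity_eq_of_nonneg (le_of_lt ht)]
    ring
  have h1 := h id
  have h0 := h 1
  simp only [id, Pi.one_apply, one_mul] at h1 h0
  rw [h1, h0, integral_Ioi_mul_add_mul_exp_eq_H_mul]
  ring

noncomputable def densityXL (p : ℝ × ℝ) : ℝ := if 0 ≤ p.2 then jointDensity p.1 p.2 else 0

lemma densityXL_nonneg : 0 ≤ densityXL := fun p => by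
  unfold densityXL
  split_ifs with h
  exacts [jointDensity_nonneg _ h, le_rfl]

lemma measurable_densityXL : Measurable densityXL :=
  Measurable.ite (measurableSet_le measurable_const measurable_snd)
    (by unfold jointDensity; fun_prop) measurable_const

lemma integral_densityXL_mul_snd (x : ℝ) :
    ∫ l, densityXL (x, l) * l = H |x| * ∫ l, densityXL (x, l) := by
  have h (g : ℝ → ℝ) : ∫ l, densityXL (x, l) * g l = ∫ l in Ioi 0, g l * jointDensity l |x| := by
    rw [← integral_Ici_eq_integral_Ioi, ← integral_indicator measurableSet_Ici]
    congr 1 with l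
    by_cases hl : 0 ≤ l
    · simp [densityXL, hl, jointDensity_comm_of_nonneg hl, mul_comm]
    · simp [densityXL, hl]
  have h1 := h id
  have h0 := h 1
  simp only [id, Pi.one_apply, mul_one, one_mul] at h1 h0
  rw [h1, h0, integral_Ioi_mul_jointDensity]

lemma integral_densityXL_mul_abs_fst (l : ℝ) :
    ∫ x, densityXL (x, l) * |x| = H l * ∫ x, densityXL (x, l) := by
  by_cases hl : 0 ≤ l
  · have h (g : ℝ → ℝ) :
        ∫ x, densityXL (x, l) * g |x| = 2 * ∫ t in Ioi 0, g t * jointDensity t l := by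
      rw [← integral_comp_abs (f := fun t => g t * jointDensity t l)]
      simp [densityXL, hl, jointDensity_abs, mul_comm]
    have h1 := h id
    have h0 := h 1
    simp only [id, Pi.one_apply, mul_one, one_mul] at h1 h0
    rw [h1, h0, integral_Ioi_mul_jointDensity]
    ring
  · simp [densityXL, hl]

lemma mul_one_add_mul_exp_le (u : ℝ) :
    u * (1 + u) * exp (-u ^ 2 / 2) ≤ 6 * exp (-u ^ 2 / 4) := by
  have hpoly : u * (1 + u) ≤ 6 * exp (u ^ 2 / 4) := by
    nlinarith [add_one_le_exp (u ^ 2 / 4), sq_nonneg (u - 2)]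
  calc u * (1 + u) * exp (-u ^ 2 / 2) ≤ 6 * exp (u ^ 2 / 4) * exp (-u ^ 2 / 2) :=
        mul_le_mul_of_nonneg_right hpoly (exp_pos _).le
    _ = 6 * exp (-u ^ 2 / 4) := by rw [mul_assoc, ← exp_add]; ring_nf

lemma one_add_add_mul_densityXL_le (x l : ℝ) :
    (1 + |x| + l) * densityXL (x, l) ≤ 6 / √(2 * π) * (exp (-x ^ 2 / 4) * exp (-l ^ 2 / 4)) := by
  by_cases hl : 0 ≤ l
  · have hgauss : exp (-(|x| + l) ^ 2 / 4) ≤ exp (-x ^ 2 / 4) * exp (-l ^ 2 / 4) := by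
      rw [← exp_add]
      exact exp_le_exp.2 (by nlinarith [sq_abs x, mul_nonneg (abs_nonneg x) hl])
    calc (1 + |x| + l) * densityXL (x, l)
        = 1 / √(2 * π) * ((|x| + l) * (1 + (|x| + l)) * exp (-(|x| + l) ^ 2 / 2)) := by
          simp only [densityXL, if_pos hl, jointDensity]
          ring
      _ ≤ 1 / √(2 * π) * (6 * (exp (-x ^ 2 / 4) * exp (-l ^ 2 / 4))) :=
          mul_le_mul_of_nonneg_left ((mul_one_add_mul_exp_le _).trans
            (mul_le_mul_of_nonneg_left hgauss (by norm_num))) (by positivity)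
      _ = _ := by ring
  · simp only [densityXL, if_neg hl, mul_zero]
    positivity

lemma integrable_densityXL_mul {g : ℝ × ℝ → ℝ} (hg : Measurable g) {C : ℝ}
    (hgC : ∀ x l, 0 ≤ l → |g (x, l)| ≤ C * (1 + |x| + l)) :
    Integrable (fun p => densityXL p * g p) (volume.prod volume) := by
  have hC : 0 ≤ C := by simpa using (abs_nonneg _).trans (hgC 0 0 le_rfl)
  have hexp : Integrable fun x : ℝ => exp (-x ^ 2 / 4) :=
    (integrable_exp_neg_mul_sq (b := 1 / 4) (by norm_num)).congr
      (Eventually.of_forall fun x => by ring_nf)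
  refine ((hexp.mul_prod hexp).const_mul (C * (6 / √(2 * π)))).mono'
    (measurable_densityXL.mul hg).aestronglyMeasurable (Eventually.of_forall fun ⟨x, l⟩ => ?_)
  rw [norm_mul, Real.norm_of_nonneg (densityXL_nonneg _), Real.norm_eq_abs]
  by_cases hl : 0 ≤ l
  · calc densityXL (x, l) * |g (x, l)| ≤ densityXL (x, l) * (C * (1 + |x| + l)) :=
          mul_le_mul_of_nonneg_left (hgC x l hl) (densityXL_nonneg _)
      _ = C * ((1 + |x| + l) * densityXL (x, l)) := by ring
      _ ≤ C * (6 / √(2 * π) * (exp (-x ^ 2 / 4) * exp (-l ^ 2 / 4))) :=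
          mul_le_mul_of_nonneg_left (one_add_add_mul_densityXL_le x l) hC
      _ = _ := by ring
  · simp only [densityXL, if_neg hl, zero_mul]
    positivity

lemma integrable_densityXL_mul_snd :
    Integrable (fun p => densityXL p * p.2) (volume.prod volume) :=
  integrable_densityXL_mul measurable_snd (C := 1) fun x l hl => by
    rw [abs_of_nonneg hl]
    linarith [abs_nonneg x]

lemma integrable_densityXL_mul_abs_fst :
    Integrable (fun p => densityXL p * |p.1|) (volume.prod volume) :=
  integrable_densityXL_mul measurable_fst.abs (C := 1) fun x l hl => by
    rw [abs_abs]
    linarith [abs_nonneg x]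

lemma abs_H_le_H_zero_mul {c : ℝ} (hc : 0 ≤ c) (x : ℝ) {l : ℝ} (hl : 0 ≤ l) :
    |H c| ≤ H 0 * (1 + |x| + l) := by
  rw [abs_of_nonneg (H_nonneg c)]
  exact (H_le_H_zero hc).trans (le_mul_of_one_le_right (H_nonneg 0) (by linarith [abs_nonneg x]))

lemma integrable_densityXL_mul_H_abs_fst :
    Integrable (fun p => densityXL p * H |p.1|) (volume.prod volume) :=
  integrable_densityXL_mul (measurable_H.comp measurable_fst.abs) fun x _ hl =>
    abs_H_le_H_zero_mul (abs_nonneg x) x hl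

lemma integrable_densityXL_mul_H_snd :
    Integrable (fun p => densityXL p * H p.2) (volume.prod volume) :=
  integrable_densityXL_mul (measurable_H.comp measurable_snd) fun x _ hl =>
    abs_H_le_H_zero_mul hl x hl

/-- If `(X, L)` has density `h(x,l)` (supported on `ℝ × [0,∞)`) with respect to Lebesgue
measure, then a.s. `E[L | σ(X)] = H(|X|)` and `E[|X| | σ(L)] = H(L)`. -/
theorem condExp_of_jointDensity {Ω : Type*} [MeasureSpace Ω]
    [IsProbabilityMeasure (ℙ : Measure Ω)]
    (X L : Ω → ℝ) (hX : Measurable X) (hL : Measurable L)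
    (hlaw : Measure.map (fun ω => (X ω, L ω)) ℙ
      = (volume : Measure (ℝ × ℝ)).withDensity
          (fun p => ENNReal.ofReal (if 0 ≤ p.2 then jointDensity p.1 p.2 else 0))) :
    (∀ᵐ ω ∂ℙ, (ℙ[L | MeasurableSpace.comap X inferInstance]) ω = H |X ω|) ∧
    (∀ᵐ ω ∂ℙ, (ℙ[fun ω' => |X ω'| | MeasurableSpace.comap L inferInstance]) ω = H (L ω)) := by
  have hXL : (ℙ : Measure Ω).map (fun ω => (X ω, L ω))
      = (volume.prod volume).withDensity fun p => ENNReal.ofReal (densityXL p) := by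
    rw [hlaw, Measure.volume_eq_prod]
    rfl
  have hLX := map_prodMk_swap_eq_withDensity hX hL measurable_densityXL.ennreal_ofReal hXL
  constructor
  · exact condExp_comp_snd_ae_eq_of_map_eq_withDensity hX hL measurable_densityXL densityXL_nonneg
      hXL measurable_id (measurable_H.comp measurable_abs) integrable_densityXL_mul_snd
      integrable_densityXL_mul_H_abs_fst (Eventually.of_forall integral_densityXL_mul_snd)
  · exact condExp_comp_snd_ae_eq_of_map_eq_withDensity hL hX
      (measurable_densityXL.comp measurable_swap) (fun p => densityXL_nonneg p.swap) hLX
      measurable_abs measurable_H (integrable_swap_iff.2 integrable_densityXL_mul_abs_fst)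
      (integrable_swap_iff.2 integrable_densityXL_mul_H_snd)
      (Eventually.of_forall integral_densityXL_mul_abs_fst)
end

section
/- For every l > 0, H(l) = l · E[1/(N² + l²)], where N is a standard Gaussian random variable; that is, e^{l²/2} ∫_l^∞ e^{−x²/2} dx = l · ∫_ℝ (1/(x²+l²)) · (1/√(2π)) e^{−x²/2} dx. -/
/-!
With `a = x² + l²` one has `2 e^{-l²/2} e^{-x²/2} / a = ∫_{s>1} e^{-a s/2} ds`. Integrate over `x`
and swap the two integrals (the integrand is dominated by `e^{-x²/2} e^{-l² s/2}`): the Gaussian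
integral in `x` leaves `∫_{s>1} e^{-l² s/2} √(2π/s) ds`, which the substitutions `s = u²` and
`v = l u` turn into `(2√(2π)/l) ∫_{v>l} e^{-v²/2} dv`.
-/

open MeasureTheory Real Set

theorem integral_exp_neg_mul_Ioi {b : ℝ} (hb : 0 < b) (c : ℝ) :
    ∫ s in Ioi c, exp (-(b * s)) = exp (-(b * c)) / b := by
  simpa [neg_mul, neg_div, div_neg] using integral_exp_mul_Ioi (neg_lt_zero.2 hb) c

theorem integral_comp_sq_Ioi {E : Type*} [NormedAddCommGroup E] [NormedSpace ℝ E]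
    (g : ℝ → E) {c : ℝ} (hc : 0 ≤ c) :
    ∫ u in Ioi (√c), (2 * u) • g (u ^ 2) = ∫ s in Ioi c, g s := by
  rw [sqrt_eq_rpow, one_div]
  simpa [rpow_two, show (2 : ℝ) - 1 = 1 by norm_num]
    using integral_comp_rpow_Ioi_of_pos' (g := g) two_pos hc

theorem integrable_uncurry_exp_neg_sq_add_sq_mul {l : ℝ} (hl : l ≠ 0) :
    Integrable (Function.uncurry fun x s : ℝ => exp (-((x ^ 2 + l ^ 2) / 2 * s)))
      (volume.prod (volume.restrict (Ioi 1))) := by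
  have hdom : Integrable (fun p : ℝ × ℝ => exp (-(1 / 2) * p.1 ^ 2) * exp (-(l ^ 2 / 2) * p.2))
      (volume.prod (volume.restrict (Ioi 1))) :=
    (integrable_exp_neg_mul_sq one_half_pos).mul_prod (exp_neg_integrableOn_Ioi 1 (by positivity))
  refine hdom.mono' (by fun_prop) ?_
  filter_upwards [Measure.quasiMeasurePreserving_snd.ae (ae_restrict_mem measurableSet_Ioi)]
    with ⟨x, s⟩ (hs : 1 < s)
  rw [Function.uncurry_apply_pair, norm_of_nonneg (exp_nonneg _), ← exp_add]
  exact exp_le_exp.2 (by nlinarith [mul_le_mul_of_nonneg_left hs.le (sq_nonneg x)])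

theorem integral_Ioi_one_exp_neg_sq_add_sq_mul (l x : ℝ) (hl : l ≠ 0) :
    ∫ s in Ioi 1, exp (-((x ^ 2 + l ^ 2) / 2 * s))
      = 2 * exp (-(l ^ 2 / 2)) * (exp (-x ^ 2 / 2) / (x ^ 2 + l ^ 2)) := by
  rw [integral_exp_neg_mul_Ioi (by positivity), mul_one, div_div_eq_mul_div,
    show -((x ^ 2 + l ^ 2) / 2) = -(l ^ 2 / 2) + -x ^ 2 / 2 by ring, exp_add]
  ring

/-- For `s ≤ 0` both sides are junk zeros. -/
theorem integral_exp_neg_sq_add_sq_mul (l s : ℝ) :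
    ∫ x, exp (-((x ^ 2 + l ^ 2) / 2 * s)) = exp (-(l ^ 2 / 2 * s)) * √(2 * π / s) := by
  have h (x : ℝ) :
      exp (-((x ^ 2 + l ^ 2) / 2 * s)) = exp (-(l ^ 2 / 2 * s)) * exp (-(s / 2) * x ^ 2) := by
    rw [← exp_add]; ring_nf
  simp_rw [h]
  rw [integral_const_mul, integral_gaussian, div_div_eq_mul_div, mul_comm π]

theorem integral_Ioi_one_exp_neg_mul_mul_sqrt {l : ℝ} (hl : 0 < l) :
    ∫ s in Ioi 1, exp (-(l ^ 2 / 2 * s)) * √(2 * π / s)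
      = 2 * √(2 * π) / l * ∫ v in Ioi l, exp (-v ^ 2 / 2) :=
  calc _ = ∫ u in Ioi 1, 2 * √(2 * π) * exp (-(l * u) ^ 2 / 2) := by
        rw [← integral_comp_sq_Ioi _ zero_le_one, sqrt_one]
        refine setIntegral_congr_fun measurableSet_Ioi fun u (hu : 1 < u) => ?_
        rw [sqrt_div' _ (sq_nonneg u), sqrt_sq (by linarith), smul_eq_mul]
        field_simp
    _ = 2 * √(2 * π) * (l⁻¹ * ∫ v in Ioi l, exp (-v ^ 2 / 2)) := by
        rw [integral_const_mul, integral_comp_mul_left_Ioi (fun v => exp (-v ^ 2 / 2)) 1 hl,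
          mul_one, smul_eq_mul]
    _ = _ := by ring

theorem integral_exp_neg_sq_div_two_div_sq_add_sq {l : ℝ} (hl : 0 < l) :
    ∫ x, exp (-x ^ 2 / 2) / (x ^ 2 + l ^ 2)
      = √(2 * π) * exp (l ^ 2 / 2) / l * ∫ v in Ioi l, exp (-v ^ 2 / 2) := by
  refine mul_left_cancel₀ (by positivity : 2 * exp (-(l ^ 2 / 2)) ≠ 0) ?_
  calc _ = ∫ x, ∫ s in Ioi 1, exp (-((x ^ 2 + l ^ 2) / 2 * s)) := by
        simp_rw [integral_Ioi_one_exp_neg_sq_add_sq_mul l _ hl.ne', integral_const_mul]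
    _ = ∫ s in Ioi 1, ∫ x, exp (-((x ^ 2 + l ^ 2) / 2 * s)) :=
        integral_integral_swap (integrable_uncurry_exp_neg_sq_add_sq_mul hl.ne')
    _ = ∫ s in Ioi 1, exp (-(l ^ 2 / 2 * s)) * √(2 * π / s) := by
        simp_rw [integral_exp_neg_sq_add_sq_mul]
    _ = _ := by
        rw [integral_Ioi_one_exp_neg_mul_mul_sqrt hl, exp_neg]
        field_simp

/-- For every `l > 0`, `H(l) = l · E[1/(N² + l²)]` where `N` is standard Gaussian:
`e^{l²/2} ∫_l^∞ e^{-x²/2} dx = l ∫_ℝ 1/(x²+l²) · (1/√(2π)) e^{-x²/2} dx`. -/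
theorem H_eq_mul_integral_inv_sq_add_sq (l : ℝ) (hl : 0 < l) :
    Real.exp (l ^ 2 / 2) * ∫ x in Set.Ioi l, Real.exp (-x ^ 2 / 2)
      = l * ∫ x : ℝ, (1 / (x ^ 2 + l ^ 2)) * ((1 / Real.sqrt (2 * π)) * Real.exp (-x ^ 2 / 2)) := by
  have h (x : ℝ) : 1 / (x ^ 2 + l ^ 2) * (1 / √(2 * π) * exp (-x ^ 2 / 2))
      = (√(2 * π))⁻¹ * (exp (-x ^ 2 / 2) / (x ^ 2 + l ^ 2)) := by ring
  simp_rw [h]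
  rw [integral_const_mul, integral_exp_neg_sq_div_two_div_sq_add_sq hl]
  field_simp
end

section
/- For every l > 0, E[1/(N² + l²)] = ∫_0^∞ e^{−v l²/2} / (2√(1+v)) dv, where N is a standard Gaussian random variable; that is, ∫_ℝ (1/(x²+l²)) · (1/√(2π)) e^{−x²/2} dx = ∫_0^∞ e^{−v l²/2} / (2√(1+v)) dv. -/
/-!
Write `1 / (x ^ 2 + l ^ 2) = ∫₀^∞ exp (-(x ^ 2 + l ^ 2) v / 2) / 2 dv` and exchange the `v`- and
`x`-integrals (Fubini applies since the integrand is nonnegative and its total mass is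
`E[1 / (N ^ 2 + l ^ 2)] ≤ 1 / l ^ 2`). For fixed `v > -1` the `x`-integral is the Gaussian integral
`E[exp (-v N ^ 2 / 2)] = 1 / √(1 + v)`, times `exp (-v l ^ 2 / 2) / 2`.
-/

open MeasureTheory ProbabilityTheory Real Set

lemma gaussianPDFReal_zero_one (x : ℝ) :
    gaussianPDFReal 0 1 x = 1 / √(2 * π) * exp (-x ^ 2 / 2) := by
  simp [gaussianPDFReal]

lemma integral_exp_neg_mul_sq_mul_gaussianPDFReal {v : ℝ} (hv : -1 < v) :
    ∫ x, exp (-(v * x ^ 2 / 2)) * gaussianPDFReal 0 1 x = 1 / √(1 + v) := by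
  have h1v : 0 < 1 + v := by linarith
  have hexp (x : ℝ) : exp (-(v * x ^ 2 / 2)) * gaussianPDFReal 0 1 x
      = 1 / √(2 * π) * exp (-((1 + v) / 2) * x ^ 2) := by
    rw [gaussianPDFReal_zero_one, mul_left_comm, ← exp_add]
    ring_nf
  simp_rw [hexp]
  rw [integral_const_mul, integral_gaussian, div_div_eq_mul_div, sqrt_div' _ h1v.le]
  field_simp

lemma integrable_inv_sq_add_sq_mul_gaussianPDFReal {l : ℝ} (hl : l ≠ 0) :
    Integrable fun x ↦ 1 / (x ^ 2 + l ^ 2) * gaussianPDFReal 0 1 x := by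
  refine (integrable_gaussianPDFReal 0 1).bdd_mul (c := 1 / l ^ 2)
    (by fun_prop : Measurable _).aestronglyMeasurable ?_
  refine ae_of_all _ fun x ↦ ?_
  rw [norm_of_nonneg (by positivity)]
  gcongr
  nlinarith [sq_nonneg x]

noncomputable def gaussianInvSqKernel (l x v : ℝ) : ℝ :=
  exp (-(x ^ 2 + l ^ 2) / 2 * v) / 2 * gaussianPDFReal 0 1 x

lemma gaussianInvSqKernel_nonneg (l x v : ℝ) : 0 ≤ gaussianInvSqKernel l x v :=
  mul_nonneg (by positivity) (gaussianPDFReal_nonneg 0 1 x)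

lemma measurable_gaussianInvSqKernel (l : ℝ) :
    Measurable (Function.uncurry (gaussianInvSqKernel l)) := by
  unfold gaussianInvSqKernel
  fun_prop

lemma integrableOn_gaussianInvSqKernel {l : ℝ} (hl : l ≠ 0) (x : ℝ) :
    IntegrableOn (gaussianInvSqKernel l x) (Ioi 0) := by
  have hpos : 0 < x ^ 2 + l ^ 2 := by positivity
  have hneg : -(x ^ 2 + l ^ 2) / 2 < 0 := by linarith
  exact ((integrableOn_exp_mul_Ioi hneg 0).div_const 2).mul_const _

lemma setIntegral_Ioi_gaussianInvSqKernel {l : ℝ} (hl : l ≠ 0) (x : ℝ) :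
    ∫ v in Ioi 0, gaussianInvSqKernel l x v = 1 / (x ^ 2 + l ^ 2) * gaussianPDFReal 0 1 x := by
  have hpos : 0 < x ^ 2 + l ^ 2 := by positivity
  have hneg : -(x ^ 2 + l ^ 2) / 2 < 0 := by linarith
  simp only [gaussianInvSqKernel]
  rw [integral_mul_const, integral_div, integral_exp_mul_Ioi hneg, mul_zero, exp_zero]
  field_simp

lemma integral_gaussianInvSqKernel (l : ℝ) {v : ℝ} (hv : -1 < v) :
    ∫ x, gaussianInvSqKernel l x v = exp (-v * l ^ 2 / 2) / (2 * √(1 + v)) := by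
  have hsplit (x : ℝ) : gaussianInvSqKernel l x v
      = exp (-v * l ^ 2 / 2) / 2 * (exp (-(v * x ^ 2 / 2)) * gaussianPDFReal 0 1 x) := by
    rw [gaussianInvSqKernel,
      show -(x ^ 2 + l ^ 2) / 2 * v = -v * l ^ 2 / 2 + -(v * x ^ 2 / 2) by ring, exp_add]
    ring
  simp_rw [hsplit]
  rw [integral_const_mul, integral_exp_neg_mul_sq_mul_gaussianPDFReal hv]
  field_simp

lemma integrable_gaussianInvSqKernel {l : ℝ} (hl : l ≠ 0) :
    Integrable (Function.uncurry (gaussianInvSqKernel l))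
      (volume.prod (volume.restrict (Ioi 0))) := by
  rw [integrable_prod_iff (measurable_gaussianInvSqKernel l).aestronglyMeasurable]
  refine ⟨ae_of_all _ (integrableOn_gaussianInvSqKernel hl), ?_⟩
  simp_rw [Function.uncurry_apply_pair, norm_of_nonneg (gaussianInvSqKernel_nonneg _ _ _),
    setIntegral_Ioi_gaussianInvSqKernel hl]
  exact integrable_inv_sq_add_sq_mul_gaussianPDFReal hl

/-- For every `l > 0`, `E[1/(N² + l²)] = ∫_0^∞ e^{-v l²/2}/(2√(1+v)) dv` where `N` is a
standard Gaussian random variable. -/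
theorem integral_inv_sq_add_sq_gaussian (l : ℝ) (hl : 0 < l) :
    ∫ x : ℝ, (1 / (x ^ 2 + l ^ 2)) * ((1 / Real.sqrt (2 * π)) * Real.exp (-x ^ 2 / 2))
      = ∫ v in Set.Ioi (0 : ℝ), Real.exp (-v * l ^ 2 / 2) / (2 * Real.sqrt (1 + v)) := by
  simp_rw [← gaussianPDFReal_zero_one, ← setIntegral_Ioi_gaussianInvSqKernel hl.ne']
  rw [integral_integral_swap (integrable_gaussianInvSqKernel hl.ne')]
  exact setIntegral_congr_fun measurableSet_Ioi fun v hv ↦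
    integral_gaussianInvSqKernel l (by linarith [mem_Ioi.1 hv])
end

section
/- Let E be an exponential random variable with rate 1 and V a random variable uniformly distributed on [−1,1], with E and V independent. Then the random variable √(2E)·(V/2) has density y ↦ ∫_{2|y|}^∞ e^{−z²/2} dz with respect to Lebesgue measure on ℝ. -/
open MeasureTheory ProbabilityTheory Real Set
open scoped ENNReal

/-!
Substituting `e = z² / 2` shows that `Z = √(2E)` has the Rayleigh density `z e^{-z²/2}` on
`(0, ∞)`, and `V / 2` is uniform on `[-1/2, 1/2]`. Given `Z = z`, the product `Z · V / 2` is
uniform on `[-z/2, z/2]` with density `1/z`, which cancels the factor `z` of the Rayleigh density;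
by Tonelli the density of the product at `y` is `∫_{2|y|}^∞ e^{-z²/2} dz`.
-/

lemma exponentialPDF_one_eq_indicator :
    exponentialPDF 1 = (Ici 0).indicator fun e => ENNReal.ofReal (exp (-e)) := by
  ext e
  by_cases he : 0 ≤ e
  · rw [exponentialPDF_of_nonneg he, indicator_of_mem (mem_Ici.2 he), one_mul, one_mul]
  · rw [exponentialPDF_of_neg (not_le.1 he), indicator_of_notMem (notMem_Ici.2 (not_le.1 he))]

lemma image_sq_div_two_Ici_inter (s : Set ℝ) :
    (fun z : ℝ => z ^ 2 / 2) '' (Ici 0 ∩ s) = Ici 0 ∩ (fun e => √(2 * e)) ⁻¹' s := by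
  ext e
  constructor
  · rintro ⟨z, ⟨hz, hzs⟩, rfl⟩
    refine ⟨mem_Ici.2 (by positivity), ?_⟩
    rwa [mem_preimage, mul_div_cancel₀ _ two_ne_zero, sqrt_sq hz]
  · rintro ⟨he, hes⟩
    refine ⟨√(2 * e), ⟨sqrt_nonneg _, hes⟩, ?_⟩
    show √(2 * e) ^ 2 / 2 = e
    rw [sq_sqrt (by linarith [mem_Ici.1 he])]
    ring

-- `ENNReal.ofReal z` vanishes for `z ≤ 0`, so this density lives on `(0, ∞)`.
lemma map_sqrt_two_mul_expMeasure_one :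
    (expMeasure 1).map (fun e => √(2 * e)) =
      volume.withDensity fun z => ENNReal.ofReal z * ENNReal.ofReal (exp (-z ^ 2 / 2)) := by
  have hf : Measurable fun e : ℝ => √(2 * e) := by fun_prop
  ext s hs
  have hderiv : ∀ z ∈ Ici 0 ∩ s, HasDerivWithinAt (fun z : ℝ => z ^ 2 / 2) z (Ici 0 ∩ s) z :=
    fun z _ => by simpa using ((hasDerivAt_pow 2 z).div_const 2).hasDerivWithinAt
  have hinj : InjOn (fun z : ℝ => z ^ 2 / 2) (Ici 0 ∩ s) := fun a ha b hb hab => by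
    nlinarith [mem_Ici.1 ha.1, mem_Ici.1 hb.1]
  rw [Measure.map_apply hf hs, withDensity_apply _ hs, expMeasure, gammaMeasure,
    withDensity_apply _ (hf hs)]
  change ∫⁻ e in _, exponentialPDF 1 e = _
  rw [exponentialPDF_one_eq_indicator, setLIntegral_indicator measurableSet_Ici,
    ← image_sq_div_two_Ici_inter, lintegral_image_eq_lintegral_abs_deriv_mul
      (measurableSet_Ici.inter hs) hderiv hinj, ← setLIntegral_indicator measurableSet_Ici]
  refine setLIntegral_congr_fun hs fun z _ => ?_
  rcases le_or_gt 0 z with hz | hz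
  · rw [indicator_of_mem (mem_Ici.2 hz), abs_of_nonneg hz, neg_div]
  · rw [indicator_of_notMem (notMem_Ici.2 hz), ENNReal.ofReal_of_nonpos hz.le, zero_mul]

lemma map_div_two_restrict_Icc_neg_one_one :
    (((2 : ℝ≥0∞)⁻¹ • volume.restrict (Icc (-1 : ℝ) 1)).map (· / 2)) =
      volume.restrict (Icc (-2⁻¹) 2⁻¹) := by
  ext s hs
  have hpre : (· / 2) ⁻¹' s ∩ Icc (-1 : ℝ) 1 = (· * 2⁻¹) ⁻¹' (s ∩ Icc (-2⁻¹) 2⁻¹) := by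
    ext v
    simp only [mem_inter_iff, mem_preimage, mem_Icc, div_eq_mul_inv]
    constructor <;> rintro ⟨h, h1, h2⟩ <;> exact ⟨h, by linarith, by linarith⟩
  rw [Measure.map_apply (by fun_prop) hs, Measure.smul_apply, smul_eq_mul,
    Measure.restrict_apply (hs.preimage (by fun_prop)), Measure.restrict_apply hs, hpre,
    Real.volume_preimage_mul_right (by norm_num), inv_inv, abs_two, ← mul_assoc,
    ENNReal.ofReal_ofNat, ENNReal.inv_mul_cancel (by norm_num) (by norm_num), one_mul]

lemma ofReal_mul_volume_preimage_mul_left_inter_Ioo (z : ℝ) (s : Set ℝ) :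
    ENNReal.ofReal z * volume ((z * ·) ⁻¹' s ∩ Ioo (-2⁻¹) 2⁻¹) =
      volume ({y | 2 * |y| < z} ∩ s) := by
  rcases le_or_gt z 0 with hz | hz
  · have hempty : {y : ℝ | 2 * |y| < z} = ∅ :=
      eq_empty_of_forall_notMem fun y hy => by linarith [abs_nonneg y, mem_ofPred_eq ▸ hy]
    rw [ENNReal.ofReal_of_nonpos hz, zero_mul, hempty, empty_inter, measure_empty]
  have hpre : (z * ·) ⁻¹' s ∩ Ioo (-2⁻¹) 2⁻¹ = (z * ·) ⁻¹' ({y | 2 * |y| < z} ∩ s) := by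
    ext w
    simp only [mem_inter_iff, mem_preimage, mem_ofPred_eq, abs_mul, abs_of_pos hz, mem_Ioo]
    rw [and_comm, ← abs_lt]
    refine and_congr_left fun _ => ?_
    constructor <;> intro h <;> nlinarith
  rw [hpre, Real.volume_preimage_mul_left hz.ne', abs_inv, abs_of_pos hz, ← mul_assoc,
    ← ENNReal.ofReal_mul hz.le, mul_inv_cancel₀ hz.ne', ENNReal.ofReal_one, one_mul]

lemma map_mul_prod_restrict_Icc_eq_withDensity (q : ℝ → ℝ≥0∞) (hq : Measurable q) :
    ((volume.withDensity fun z => ENNReal.ofReal z * q z).prod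
        (volume.restrict (Icc (-2⁻¹ : ℝ) 2⁻¹))).map (fun p => p.1 * p.2) =
      volume.withDensity fun y => ∫⁻ z in Ioi (2 * |y|), q z := by
  have hmul : Measurable fun p : ℝ × ℝ => p.1 * p.2 := by fun_prop
  have hT : MeasurableSet {p : ℝ × ℝ | 2 * |p.2| < p.1} :=
    measurableSet_lt (by fun_prop) (by fun_prop)
  ext s hs
  have hslice (z : ℝ) : ENNReal.ofReal z * q z *
      volume.restrict (Ioo (-2⁻¹) 2⁻¹) (Prod.mk z ⁻¹' ((fun p => p.1 * p.2) ⁻¹' s)) =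
      ∫⁻ y in s, {p : ℝ × ℝ | 2 * |p.2| < p.1}.indicator (fun p => q p.1) (z, y) := by
    change _ = ∫⁻ y in s, {y | 2 * |y| < z}.indicator (fun _ => q z) y
    rw [lintegral_indicator_const (measurableSet_lt (by fun_prop) measurable_const),
      Measure.restrict_apply' hs, Measure.restrict_apply' measurableSet_Ioo, mul_right_comm,
      mul_comm _ (q z)]
    exact congrArg (q z * ·) (ofReal_mul_volume_preimage_mul_left_inter_Ioo z s)
  rw [← Measure.restrict_congr_set Ioo_ae_eq_Icc, Measure.map_apply hmul hs,
    Measure.prod_apply (hmul hs), lintegral_withDensity_eq_lintegral_mul _ (by fun_prop)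
      (measurable_measure_prodMk_left (hmul hs)), withDensity_apply _ hs]
  simp_rw [Pi.mul_apply, hslice]
  rw [lintegral_lintegral_swap (f := fun z y => {p : ℝ × ℝ | 2 * |p.2| < p.1}.indicator
    (fun p => q p.1) (z, y)) ((hq.comp measurable_fst).indicator hT).aemeasurable]
  refine setLIntegral_congr_fun hs fun y _ => ?_
  change ∫⁻ z, (Ioi (2 * |y|)).indicator q z = _
  exact lintegral_indicator measurableSet_Ioi q

lemma lintegral_Ioi_ofReal_exp_neg_sq_div_two (a : ℝ) :
    ∫⁻ z in Ioi a, ENNReal.ofReal (exp (-z ^ 2 / 2)) =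
      ENNReal.ofReal (∫ z in Ioi a, exp (-z ^ 2 / 2)) := by
  have h : Integrable fun z : ℝ => exp (-z ^ 2 / 2) := by
    simpa [neg_div, div_eq_inv_mul] using integrable_exp_neg_mul_sq (b := 2⁻¹) (by norm_num)
  exact (ofReal_integral_eq_lintegral_ofReal h.integrableOn
    (Filter.Eventually.of_forall fun z => (exp_pos _).le)).symm

/-- If `E` is exponential with rate 1, `V` is uniform on `[-1,1]`, and `E, V` are independent,
then `√(2E)·(V/2)` has density `y ↦ ∫_{2|y|}^∞ e^{-z²/2} dz` w.r.t. Lebesgue measure on `ℝ`. -/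
theorem density_sqrt_two_exp_mul_half_uniform {Ω : Type*} [MeasureSpace Ω]
    [IsProbabilityMeasure (ℙ : Measure Ω)]
    (E V : Ω → ℝ) (hE : Measurable E) (hV : Measurable V)
    (hEdist : Measure.map E ℙ = expMeasure 1)
    (hVdist : Measure.map V ℙ = (2 : ℝ≥0∞)⁻¹ • volume.restrict (Set.Icc (-1 : ℝ) 1))
    (hindep : IndepFun E V ℙ) :
    Measure.map (fun ω => Real.sqrt (2 * E ω) * (V ω / 2)) ℙ
      = volume.withDensity
          (fun y => ENNReal.ofReal (∫ z in Set.Ioi (2 * |y|), Real.exp (-z ^ 2 / 2))) := by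
  have hjoint : Measure.map (fun ω => (E ω, V ω)) ℙ =
      (expMeasure 1).prod ((2 : ℝ≥0∞)⁻¹ • volume.restrict (Icc (-1 : ℝ) 1)) := by
    rw [← hEdist, ← hVdist]
    exact (indepFun_iff_map_prod_eq_prod_map_map hE.aemeasurable hV.aemeasurable).1 hindep
  have : IsProbabilityMeasure (expMeasure 1) := isProbabilityMeasure_expMeasure one_pos
  calc Measure.map (fun ω => √(2 * E ω) * (V ω / 2)) ℙ
      = (((expMeasure 1).map fun e => √(2 * e)).prod
          (((2 : ℝ≥0∞)⁻¹ • volume.restrict (Icc (-1 : ℝ) 1)).map (· / 2))).map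
          fun p => p.1 * p.2 := by
        rw [Measure.map_prod_map _ _ (by fun_prop) (by fun_prop), Measure.map_map (by fun_prop)
          (by fun_prop), ← hjoint, Measure.map_map (by fun_prop) (by fun_prop)]
        rfl
    _ = volume.withDensity fun y => ∫⁻ z in Ioi (2 * |y|), ENNReal.ofReal (exp (-z ^ 2 / 2)) := by
        rw [map_sqrt_two_mul_expMeasure_one, map_div_two_restrict_Icc_neg_one_one,
          map_mul_prod_restrict_Icc_eq_withDensity _ (by fun_prop)]
    _ = _ := by simp_rw [lintegral_Ioi_ofReal_exp_neg_sq_div_two]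
end

section
/- For every nonnegative measurable function f : [0,∞) → [0,∞], ∫_0^∞ ∫_0^∞ ∫_0^1 f(x/2 + λl) · l·(x+l)·e^{−(x+l)²/2} dλ dx dl = ∫_0^∞ f(ν) · (2 ∫_ν^{2ν} e^{−z²/2} dz) dν. (This identity expresses that the Brownian meander sampled at an independent uniform time has density ν ↦ 2∫_ν^{2ν} e^{−z²/2} dz.) -/
open MeasureTheory Real Filter Topology Set
open scoped ENNReal

/-! Substituting `ν = x / 2 + λ l` turns the `λ`-integral into `l⁻¹ ∫_{x/2}^{x/2+l} f`, so after
reversing the order of integration the density at `ν` is the integral of `(x + l) e^{-(x+l)²/2}`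
over `{x ≤ 2ν, l > ν - x/2}`. Integrating first in `l` gives `e^{-(ν + x/2)²/2}`, and then in
`x ∈ (0, 2ν]` gives `2 ∫_ν^{2ν} e^{-z²/2} dz`. -/

theorem lintegral_lintegral_lintegral_reverse {α β γ : Type*} [MeasurableSpace α]
    [MeasurableSpace β] [MeasurableSpace γ] {μ : Measure α} {ν : Measure β} {ρ : Measure γ}
    [SFinite μ] [SFinite ν] [SFinite ρ] {F : α → β → γ → ℝ≥0∞}
    (hF : Measurable fun p : α × β × γ => F p.1 p.2.1 p.2.2) :
    ∫⁻ a, ∫⁻ b, ∫⁻ c, F a b c ∂ρ ∂ν ∂μ = ∫⁻ c, ∫⁻ b, ∫⁻ a, F a b c ∂μ ∂ν ∂ρ := by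
  have h_ab : Measurable fun q : (α × β) × γ => F q.1.1 q.1.2 q.2 :=
    hF.comp MeasurableEquiv.prodAssoc.measurable
  have h_bc : Measurable fun q : (β × γ) × α => F q.2 q.1.1 q.1.2 :=
    hF.comp (measurable_snd.prodMk measurable_fst)
  calc ∫⁻ a, ∫⁻ b, ∫⁻ c, F a b c ∂ρ ∂ν ∂μ
      = ∫⁻ b, ∫⁻ a, ∫⁻ c, F a b c ∂ρ ∂μ ∂ν :=
        lintegral_lintegral_swap h_ab.lintegral_prod_right'.aemeasurable
    _ = ∫⁻ b, ∫⁻ c, ∫⁻ a, F a b c ∂μ ∂ρ ∂ν :=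
        lintegral_congr fun b => lintegral_lintegral_swap
          (hF.comp (measurable_fst.prodMk (measurable_const.prodMk measurable_snd))).aemeasurable
    _ = ∫⁻ c, ∫⁻ b, ∫⁻ a, F a b c ∂μ ∂ν ∂ρ :=
        lintegral_lintegral_swap h_bc.lintegral_prod_right'.aemeasurable

theorem setLIntegral_Ico_comp_add_mul {f : ℝ → ℝ≥0∞} (hf : Measurable f) (a : ℝ) {l : ℝ}
    (hl : 0 < l) :
    ENNReal.ofReal l * ∫⁻ t in Ico 0 1, f (a + t * l) = ∫⁻ y in Ico a (a + l), f y := by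
  have hφ : Measurable fun t : ℝ => a + t * l := by fun_prop
  have hmap : Measure.map (fun t : ℝ => a + t * l) volume = ENNReal.ofReal l⁻¹ • volume := by
    have : (fun t : ℝ => a + t * l) = (a + ·) ∘ (· * l) := rfl
    rw [this, ← Measure.map_map (measurable_const_add a) (measurable_mul_const l),
      Real.map_volume_mul_right hl.ne', Measure.map_smul, map_add_left_eq_self,
      abs_of_pos (inv_pos.2 hl)]
  have hpre : (fun t : ℝ => a + t * l) ⁻¹' Ico a (a + l) = Ico 0 1 := by
    ext t
    simp only [mem_preimage, mem_Ico, le_add_iff_nonneg_right, add_lt_add_iff_left]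
    rw [mul_nonneg_iff_of_pos_right hl, mul_lt_iff_lt_one_left hl]
  rw [← hpre, ← setLIntegral_map measurableSet_Ico hf hφ, hmap, Measure.restrict_smul,
    lintegral_smul_measure, smul_eq_mul, ← mul_assoc, ← ENNReal.ofReal_mul hl.le,
    mul_inv_cancel₀ hl.ne', ENNReal.ofReal_one, one_mul]

theorem setLIntegral_Ioi_add_mul_exp_neg_sq (x : ℝ) {c : ℝ} (hc : 0 ≤ x + c) :
    ∫⁻ l in Ioi c, ENNReal.ofReal ((x + l) * exp (-(x + l) ^ 2 / 2))
      = ENNReal.ofReal (exp (-(x + c) ^ 2 / 2)) := by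
  have hderiv : ∀ l ∈ Ici c, HasDerivAt (fun l => -exp (-(x + l) ^ 2 / 2))
      ((x + l) * exp (-(x + l) ^ 2 / 2)) l := by
    intro l _
    refine ((((hasDerivAt_id' l).const_add x).fun_pow 2).fun_neg.div_const 2).exp.fun_neg
      |>.congr_deriv ?_
    norm_num
    ring
  have hnonneg : ∀ l ∈ Ioi c, 0 ≤ (x + l) * exp (-(x + l) ^ 2 / 2) := fun l hl =>
    mul_nonneg (by linarith [mem_Ioi.1 hl]) (exp_pos _).le
  have hlim : Tendsto (fun l => -exp (-(x + l) ^ 2 / 2)) atTop (𝓝 (-0)) := by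
    refine (Real.tendsto_exp_atBot.comp ?_).neg
    have : Tendsto (fun l => (x + l) ^ 2) atTop atTop :=
      (tendsto_pow_atTop two_ne_zero).comp (tendsto_atTop_add_const_left _ x tendsto_id)
    exact (tendsto_neg_atTop_atBot.comp this).atBot_div_const two_pos
  rw [← ofReal_integral_eq_lintegral_ofReal
      (integrableOn_Ioi_deriv_of_nonneg' hderiv hnonneg hlim)
      ((ae_restrict_iff' measurableSet_Ioi).2 (Eventually.of_forall hnonneg)),
    integral_Ioi_of_hasDerivAt_of_nonneg' hderiv hnonneg hlim]
  simp

theorem setLIntegral_Ioc_exp_neg_add_half_sq {ν : ℝ} (hν : 0 ≤ ν) :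
    ∫⁻ x in Ioc 0 (2 * ν), ENNReal.ofReal (exp (-(ν + x / 2) ^ 2 / 2))
      = ENNReal.ofReal (2 * ∫ z in ν..(2 * ν), exp (-z ^ 2 / 2)) := by
  rw [← ofReal_integral_eq_lintegral_ofReal (by fun_prop : Continuous _).integrableOn_Ioc
      (Eventually.of_forall fun x => (exp_pos _).le),
    ← intervalIntegral.integral_of_le (by linarith)]
  congr 1
  simp_rw [add_comm ν]
  rw [intervalIntegral.integral_comp_div_add (fun z => exp (-z ^ 2 / 2)) two_ne_zero,
    zero_div, zero_add, show 2 * ν / 2 + ν = 2 * ν by ring, smul_eq_mul]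

/-- Half-open in `ν`, so that its `l`-section is exactly `Ioi (ν - x / 2)`. -/
noncomputable def meanderKernel (f : ℝ → ℝ≥0∞) (l x ν : ℝ) : ℝ≥0∞ :=
  (Ico (x / 2) (x / 2 + l)).indicator f ν * ENNReal.ofReal ((x + l) * exp (-(x + l) ^ 2 / 2))

theorem measurable_meanderKernel {f : ℝ → ℝ≥0∞} (hf : Measurable f) :
    Measurable fun p : ℝ × ℝ × ℝ => meanderKernel f p.1 p.2.1 p.2.2 := by
  have hS : MeasurableSet ({p : ℝ × ℝ × ℝ | p.2.1 / 2 ≤ p.2.2} ∩ {p | p.2.2 < p.2.1 / 2 + p.1}) :=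
    (measurableSet_le (by fun_prop) (by fun_prop)).inter
      (measurableSet_lt (by fun_prop) (by fun_prop))
  simp only [meanderKernel, indicator_apply, mem_Ico]
  exact (Measurable.ite hS (hf.comp (by fun_prop)) measurable_const).mul (by fun_prop)

theorem setLIntegral_Icc_eq_setLIntegral_meanderKernel {f : ℝ → ℝ≥0∞} (hf : Measurable f)
    {l x : ℝ} (hl : 0 < l) (hx : 0 < x) :
    ∫⁻ t in Icc 0 1, f (x / 2 + t * l) * ENNReal.ofReal (l * (x + l) * exp (-(x + l) ^ 2 / 2))
      = ∫⁻ ν in Ioi 0, meanderKernel f l x ν := by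
  have hIco : Ico (x / 2) (x / 2 + l) ⊆ Ioi 0 := fun y hy => (half_pos hx).trans_le hy.1
  simp only [meanderKernel]
  rw [lintegral_mul_const _ (hf.indicator measurableSet_Ico), lintegral_indicator measurableSet_Ico,
    Measure.restrict_restrict measurableSet_Ico, inter_eq_left.2 hIco,
    ← setLIntegral_Ico_comp_add_mul hf _ hl, lintegral_mul_const _ (by fun_prop),
    setLIntegral_congr Ico_ae_eq_Icc.symm, mul_assoc, ENNReal.ofReal_mul hl.le]
  ac_rfl

theorem setLIntegral_Ioi_meanderKernel {f : ℝ → ℝ≥0∞} {x ν : ℝ} (hx : 0 ≤ x) :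
    ∫⁻ l in Ioi 0, meanderKernel f l x ν
      = (Iic (2 * ν)).indicator (fun x => f ν * ENNReal.ofReal (exp (-(ν + x / 2) ^ 2 / 2))) x := by
  by_cases hxν : x ≤ 2 * ν
  · have hK : ∀ l, meanderKernel f l x ν = (Ioi (ν - x / 2)).indicator
        (fun l => f ν * ENNReal.ofReal ((x + l) * exp (-(x + l) ^ 2 / 2))) l := by
      intro l
      have hmem : ν ∈ Ico (x / 2) (x / 2 + l) ↔ l ∈ Ioi (ν - x / 2) := by
        simp only [mem_Ico, mem_Ioi]
        exact ⟨fun h => by linarith [h.2], fun h => ⟨by linarith, by linarith⟩⟩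
      simp only [meanderKernel, indicator_apply, hmem, ite_mul, zero_mul]
    simp_rw [hK]
    rw [indicator_of_mem (mem_Iic.2 hxν), lintegral_indicator measurableSet_Ioi,
      Measure.restrict_restrict measurableSet_Ioi,
      inter_eq_left.2 (Ioi_subset_Ioi (by linarith)), lintegral_const_mul _ (by fun_prop),
      setLIntegral_Ioi_add_mul_exp_neg_sq x (by linarith), show x + (ν - x / 2) = ν + x / 2 by ring]
  · have hK : ∀ l, meanderKernel f l x ν = 0 := fun l => by
      rw [meanderKernel, indicator_of_notMem (fun h : ν ∈ Ico (x / 2) (x / 2 + l) =>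
        hxν (by linarith [h.1])), zero_mul]
    simp [hK, indicator_of_notMem (fun h : x ∈ Iic _ => hxν h)]

theorem setLIntegral_setLIntegral_meanderKernel {f : ℝ → ℝ≥0∞} {ν : ℝ} (hν : 0 ≤ ν) :
    ∫⁻ x in Ioi 0, ∫⁻ l in Ioi 0, meanderKernel f l x ν
      = f ν * ENNReal.ofReal (2 * ∫ z in ν..(2 * ν), exp (-z ^ 2 / 2)) := by
  rw [setLIntegral_congr_fun measurableSet_Ioi fun x hx =>
      setLIntegral_Ioi_meanderKernel (le_of_lt hx),
    lintegral_indicator measurableSet_Iic, Measure.restrict_restrict measurableSet_Iic,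
    Iic_inter_Ioi, lintegral_const_mul _ (by fun_prop), setLIntegral_Ioc_exp_neg_add_half_sq hν]

/-- For every nonnegative measurable `f`,
`∫_0^∞ ∫_0^∞ ∫_0^1 f(x/2 + λl) l(x+l)e^{-(x+l)²/2} dλ dx dl
  = ∫_0^∞ f(ν) (2∫_ν^{2ν} e^{-z²/2} dz) dν`:
the Brownian meander sampled at an independent uniform time has density
`ν ↦ 2∫_ν^{2ν} e^{-z²/2} dz`. -/
theorem meander_uniform_sampling_density (f : ℝ → ℝ≥0∞) (hf : Measurable f) :
    (∫⁻ l in Set.Ioi (0 : ℝ), ∫⁻ x in Set.Ioi (0 : ℝ), ∫⁻ lam in Set.Icc (0 : ℝ) 1,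
        f (x / 2 + lam * l) * ENNReal.ofReal (l * (x + l) * Real.exp (-(x + l) ^ 2 / 2)))
      = ∫⁻ ν in Set.Ioi (0 : ℝ),
          f ν * ENNReal.ofReal (2 * ∫ z in ν..(2 * ν), Real.exp (-z ^ 2 / 2)) := by
  calc _ = ∫⁻ l in Ioi 0, ∫⁻ x in Ioi 0, ∫⁻ ν in Ioi 0, meanderKernel f l x ν :=
        setLIntegral_congr_fun measurableSet_Ioi fun l hl =>
          setLIntegral_congr_fun measurableSet_Ioi fun x hx =>
            setLIntegral_Icc_eq_setLIntegral_meanderKernel hf hl hx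
    _ = ∫⁻ ν in Ioi 0, ∫⁻ x in Ioi 0, ∫⁻ l in Ioi 0, meanderKernel f l x ν :=
        lintegral_lintegral_lintegral_reverse (measurable_meanderKernel hf)
    _ = _ := setLIntegral_congr_fun measurableSet_Ioi fun ν hν =>
        setLIntegral_setLIntegral_meanderKernel (le_of_lt hν)
end

section
/- Let E be an exponential random variable with rate 1 and W a random variable uniformly distributed on [1/2, 1], with E and W independent. Then the random variable √(2E)·W has density y ↦ 2∫_y^{2y} e^{−z²/2} dz with respect to Lebesgue measure on [0,∞). -/
open MeasureTheory ProbabilityTheory Real Set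
open scoped ENNReal

/-!
Given `W = w`, the variable `√(2E)·w` is Rayleigh distributed with scale `w`, so
`P(√(2E)·W ≤ a) = 2 ∫_{1/2}^1 (1 - exp(-(a/w)²/2)) dw` for `a ≥ 0`. On the other side, the
substitution `z = y/w` writes the proposed density as `2 ∫_{1/2}^1 (y/w²) exp(-(y/w)²/2) dw`;
integrating over `y ∈ [0, a]` and exchanging the integrals gives the same distribution function.
-/

lemma integral_div_sq_mul_comp_div {g : ℝ → ℝ} (hg : Continuous g) {a b : ℝ} (ha : 0 < a)
    (hb : 0 < b) (y : ℝ) :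
    ∫ w in a..b, y / w ^ 2 * g (y / w) = ∫ z in y / b..y / a, g z := by
  have hne : ∀ w ∈ uIcc a b, w ≠ 0 := fun w hw =>
    (lt_of_lt_of_le (lt_min ha hb) hw.1).ne'
  have hderiv : ∀ w ∈ uIcc a b, HasDerivAt (fun w => y / w) (-(y / w ^ 2)) w := fun w hw => by
    simpa [div_eq_mul_inv, neg_div] using (hasDerivAt_inv (hne w hw)).const_mul y
  have hcont : ContinuousOn (fun w => -(y / w ^ 2)) (uIcc a b) :=
    (continuousOn_const.div (continuousOn_pow 2) fun w hw => pow_ne_zero 2 (hne w hw)).neg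
  rw [intervalIntegral.integral_symm (y / a),
    ← intervalIntegral.integral_comp_mul_deriv hderiv hcont hg, ← intervalIntegral.integral_neg]
  simp only [Function.comp_apply]
  congr 1 with w
  ring

lemma integral_mul_exp_neg_div_sq (w x : ℝ) :
    ∫ y in (0 : ℝ)..x, y / w ^ 2 * exp (-(y / w) ^ 2 / 2) = 1 - exp (-(x / w) ^ 2 / 2) := by
  have hderiv : ∀ y : ℝ, HasDerivAt (fun y => -exp (-(y / w) ^ 2 / 2))
      (y / w ^ 2 * exp (-(y / w) ^ 2 / 2)) y := fun y => by
    have hfun : (fun y => -exp (-(y / w) ^ 2 / 2))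
        = fun y => -exp (-(1 / (2 * w ^ 2)) * y ^ 2) := by
      ext y
      ring_nf
    rw [hfun]
    refine (((hasDerivAt_pow 2 y).const_mul _).exp.neg).congr_deriv ?_
    ring_nf
  rw [intervalIntegral.integral_eq_sub_of_hasDerivAt (fun y _ => hderiv y)
    (Continuous.intervalIntegrable (by fun_prop) _ _)]
  simp only [zero_div, ne_eq, OfNat.ofNat_ne_zero, not_false_eq_true, zero_pow, neg_zero, exp_zero,
    sub_neg_eq_add]
  ring

lemma integral_integral_exp_neg_sq_div_two (x : ℝ) :
    ∫ y in (0 : ℝ)..x, 2 * ∫ z in y..2 * y, exp (-z ^ 2 / 2)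
      = 2 * ∫ w in (1 / 2 : ℝ)..1, (1 - exp (-(x / w) ^ 2 / 2)) := by
  have hsub : ∀ y : ℝ, ∫ z in y..2 * y, exp (-z ^ 2 / 2)
      = ∫ w in (1 / 2 : ℝ)..1, y / w ^ 2 * exp (-(y / w) ^ 2 / 2) := fun y => by
    rw [integral_div_sq_mul_comp_div (g := fun z => exp (-z ^ 2 / 2)) (by fun_prop) (by norm_num)
      one_pos]
    congr 1 <;> ring
  have hint : IntegrableOn (Function.uncurry fun y w : ℝ => y / w ^ 2 * exp (-(y / w) ^ 2 / 2))
      (uIoc 0 x ×ˢ uIoc (1 / 2) 1) := by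
    have hcont : ContinuousOn (Function.uncurry fun y w : ℝ => y / w ^ 2 * exp (-(y / w) ^ 2 / 2))
        (univ ×ˢ Ioi 0) := by
      have hw : ∀ p : ℝ × ℝ, p ∈ univ ×ˢ Ioi 0 → p.2 ≠ 0 := fun p hp => ne_of_gt hp.2
      fun_prop (disch := first | exact hw | exact fun p hp => pow_ne_zero 2 (hw p hp) | norm_num)
    rw [uIoc_of_le (by norm_num : (1 / 2 : ℝ) ≤ 1)]
    refine (hcont.mono ?_).integrableOn_compact (isCompact_uIcc.prod isCompact_Icc) |>.mono_set
      (prod_mono uIoc_subset_uIcc Ioc_subset_Icc_self)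
    exact prod_mono (subset_univ _) fun w hw => (by norm_num : (0 : ℝ) < 1 / 2).trans_le hw.1
  simp_rw [hsub, intervalIntegral.integral_const_mul]
  rw [intervalIntegral_intervalIntegral_swap hint]
  simp_rw [integral_mul_exp_neg_div_sq]

lemma ofReal_intervalIntegral_eq_setLIntegral_Icc {f : ℝ → ℝ} {a b : ℝ} (hab : a ≤ b)
    (hf : ContinuousOn f (Icc a b)) (hf₀ : ∀ x ∈ Icc a b, 0 ≤ f x) :
    ENNReal.ofReal (∫ x in a..b, f x) = ∫⁻ x in Icc a b, ENNReal.ofReal (f x) := by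
  rw [intervalIntegral.integral_of_le hab, ← integral_Icc_eq_integral_Ioc,
    ofReal_integral_eq_lintegral_ofReal (hf.integrableOn_compact isCompact_Icc)
      ((ae_restrict_iff' measurableSet_Icc).2 (.of_forall hf₀))]

lemma continuous_intervalIntegral_of_continuous_bounds {X : Type*} [TopologicalSpace X]
    {g : ℝ → ℝ} (hg : Continuous g) {u v : X → ℝ} (hu : Continuous u) (hv : Continuous v) :
    Continuous fun x => ∫ z in u x..v x, g z := by
  have hsub : ∀ x, ∫ z in u x..v x, g z = (∫ z in (0 : ℝ)..v x, g z) - ∫ z in (0 : ℝ)..u x, g z :=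
    fun x => (intervalIntegral.integral_interval_sub_left (hg.intervalIntegrable _ _)
      (hg.intervalIntegrable _ _)).symm
  simp_rw [hsub]
  fun_prop

lemma setLIntegral_Icc_ofReal_integral_exp_neg_sq_div_two {a : ℝ} (ha : 0 ≤ a) :
    ∫⁻ y in Icc 0 a, ENNReal.ofReal (2 * ∫ z in y..2 * y, exp (-z ^ 2 / 2))
      = ENNReal.ofReal (2 * ∫ w in (1 / 2 : ℝ)..1, (1 - exp (-(a / w) ^ 2 / 2))) := by
  have hcont : Continuous fun y : ℝ => 2 * ∫ z in y..2 * y, exp (-z ^ 2 / 2) :=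
    continuous_const.mul
      (continuous_intervalIntegral_of_continuous_bounds (by fun_prop) continuous_id (by fun_prop))
  have hnonneg : ∀ y ∈ Icc 0 a, 0 ≤ 2 * ∫ z in y..2 * y, exp (-z ^ 2 / 2) := fun y hy =>
    mul_nonneg zero_le_two
      (intervalIntegral.integral_nonneg (by linarith [hy.1]) fun z _ => (exp_pos _).le)
  rw [← ofReal_intervalIntegral_eq_setLIntegral_Icc ha hcont.continuousOn hnonneg,
    integral_integral_exp_neg_sq_div_two]

lemma expMeasure_Iic {r t : ℝ} (hr : 0 < r) (ht : 0 ≤ t) :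
    expMeasure r (Iic t) = ENNReal.ofReal (1 - exp (-(r * t))) := by
  have := isProbabilityMeasure_expMeasure hr
  rw [← ofReal_cdf, cdf_expMeasure_eq hr, if_pos ht]

lemma setOf_sqrt_two_mul_mul_le {w a : ℝ} (hw : 0 < w) (ha : 0 ≤ a) :
    {e : ℝ | √(2 * e) * w ≤ a} = Iic ((a / w) ^ 2 / 2) := by
  ext e
  rw [mem_ofPred_eq, ← le_div_iff₀ hw, sqrt_le_left (div_nonneg ha hw.le), mem_Iic]
  constructor <;> intro h <;> linarith

lemma setLIntegral_Icc_expMeasure_sqrt_two_mul_mul_le {a : ℝ} (ha : 0 ≤ a) :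
    2 * ∫⁻ w in Icc (1 / 2 : ℝ) 1, expMeasure 1 {e | √(2 * e) * w ≤ a}
      = ENNReal.ofReal (2 * ∫ w in (1 / 2 : ℝ)..1, (1 - exp (-(a / w) ^ 2 / 2))) := by
  have hpos : ∀ w ∈ Icc (1 / 2 : ℝ) 1, 0 < w := fun w hw => by linarith [hw.1]
  have hslice : ∀ w ∈ Icc (1 / 2 : ℝ) 1, expMeasure 1 {e | √(2 * e) * w ≤ a}
      = ENNReal.ofReal (1 - exp (-(a / w) ^ 2 / 2)) := fun w hw => by
    rw [setOf_sqrt_two_mul_mul_le (hpos w hw) ha, expMeasure_Iic one_pos (by positivity), one_mul,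
      neg_div]
  have hdiv : ContinuousOn (fun w : ℝ => a / w) (Icc (1 / 2) 1) :=
    continuousOn_const.div continuousOn_id fun w hw => (hpos w hw).ne'
  have hcont : ContinuousOn (fun w : ℝ => 1 - exp (-(a / w) ^ 2 / 2)) (Icc (1 / 2) 1) := by
    fun_prop
  have hnonneg : ∀ w ∈ Icc (1 / 2 : ℝ) 1, 0 ≤ 1 - exp (-(a / w) ^ 2 / 2) := fun w _ => by
    rw [sub_nonneg, exp_le_one_iff, neg_div]
    exact neg_nonpos.2 (by positivity)
  rw [setLIntegral_congr_fun measurableSet_Icc hslice,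
    ← ofReal_intervalIntegral_eq_setLIntegral_Icc (by norm_num) hcont hnonneg,
    ENNReal.ofReal_mul zero_le_two, ENNReal.ofReal_ofNat]

/-- If `E` is exponential with rate 1, `W` is uniform on `[1/2,1]`, and `E, W` are independent,
then `√(2E)·W` has density `y ↦ 2∫_y^{2y} e^{-z²/2} dz` w.r.t. Lebesgue measure on `[0,∞)`. -/
theorem density_sqrt_two_exp_mul_uniform {Ω : Type*} [MeasureSpace Ω]
    [IsProbabilityMeasure (ℙ : Measure Ω)]
    (E W : Ω → ℝ) (hE : Measurable E) (hW : Measurable W)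
    (hEdist : Measure.map E ℙ = expMeasure 1)
    (hWdist : Measure.map W ℙ = (2 : ℝ≥0∞) • volume.restrict (Set.Icc (1 / 2 : ℝ) 1))
    (hindep : IndepFun E W ℙ) :
    Measure.map (fun ω => Real.sqrt (2 * E ω) * W ω) ℙ
      = (volume.restrict (Set.Ici (0 : ℝ))).withDensity
          (fun y => ENNReal.ofReal (2 * ∫ z in y..(2 * y), Real.exp (-z ^ 2 / 2))) := by
  have := isProbabilityMeasure_expMeasure one_pos
  set f : ℝ × ℝ → ℝ := fun p => √(2 * p.1) * p.2
  have hf : Measurable f := by fun_prop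
  have hlaw : Measure.map (fun ω => √(2 * E ω) * W ω) ℙ
      = ((expMeasure 1).prod ((2 : ℝ≥0∞) • volume.restrict (Icc (1 / 2 : ℝ) 1))).map f := by
    rw [← hEdist, ← hWdist, ← (indepFun_iff_map_prod_eq_prod_map_map hE.aemeasurable
      hW.aemeasurable).1 hindep, Measure.map_map hf (hE.prodMk hW)]
    rfl
  refine Measure.ext_of_Iic _ _ fun a => ?_
  rw [hlaw, Measure.map_apply hf measurableSet_Iic, Measure.prod_apply_symm (hf measurableSet_Iic),
    lintegral_smul_measure, withDensity_apply _ measurableSet_Iic,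
    Measure.restrict_restrict measurableSet_Iic, Iic_inter_Ici]
  change 2 * ∫⁻ w in Icc (1 / 2 : ℝ) 1, expMeasure 1 {e | √(2 * e) * w ≤ a} = _
  rcases lt_or_ge a 0 with ha | ha
  · have hslice : ∀ w ∈ Icc (1 / 2 : ℝ) 1, {e : ℝ | √(2 * e) * w ≤ a} = ∅ := fun w hw =>
      eq_empty_of_forall_notMem fun e he =>
        ha.not_ge ((mul_nonneg (sqrt_nonneg _) (by linarith [hw.1])).trans he)
    rw [setLIntegral_congr_fun measurableSet_Icc fun w hw => by rw [hslice w hw, measure_empty],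
      Icc_eq_empty_of_lt ha]
    simp
  · exact (setLIntegral_Icc_expMeasure_sqrt_two_mul_mul_le ha).trans
      (setLIntegral_Icc_ofReal_integral_exp_neg_sq_div_two ha).symm
end
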